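/- Let 0 < p < 1 and α ∈ ℕ ∪ (1/p − 1, ∞). Then the series ∑_{ν=0}^∞ |binom(α,ν)|^p converges, and consequently for any f ∈ L_p(𝕋) and any δ, the fractional difference Δ_δ^α f(x) = ∑_{ν=0}^∞ binom(α,ν)(−1)^ν f(x−νδ) satisfies ‖Δ_δ^α f‖_p^p ≤ C(α,p) ‖f‖_p^p. -/

import Mathlib

open MeasureTheory Real Filter
open scoped Classical

noncomputable section

/-- The L_p quasi-norm on the torus (period 2π). -/
def lpNorm (p : ℝ) (f : ℝ → ℂ) : ℝ :=
  ((1 / (2 * Real.pi)) * ∫ x in (0:ℝ)..(2 * Real.pi), ‖f x‖ ^ p) ^ (1 / p)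

/-- Membership in L_p(𝕋): 2π-periodic with integrable |f|^p on a period. -/
def InLp (p : ℝ) (f : ℝ → ℂ) : Prop :=
  Function.Periodic f (2 * Real.pi) ∧
    IntervalIntegrable (fun x => ‖f x‖ ^ p) volume 0 (2 * Real.pi)

/-- Generalized (fractional) binomial coefficient binom(α,ν). -/
def fracBinom (α : ℝ) : ℕ → ℝ
  | 0 => 1
  | n + 1 => fracBinom α n * (α - n) / (n + 1)

/-- Fractional difference Δ_δ^α f(x) = ∑ binom(α,ν)(−1)^ν f(x−νδ). -/
def fracDiff (α δ : ℝ) (f : ℝ → ℂ) (x : ℝ) : ℂ :=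
  ∑' ν : ℕ, (fracBinom α ν : ℂ) * (-1) ^ ν * f (x - ν * δ)

/-- Fractional modulus of smoothness ω_α(f,h)_p. -/
def modulus (α p : ℝ) (f : ℝ → ℂ) (h : ℝ) : ℝ :=
  sSup ((fun δ => lpNorm p (fracDiff α δ f)) '' {δ : ℝ | |δ| < h})

/-- Trigonometric polynomials of degree ≤ n. -/
def IsTrigPoly (n : ℕ) (T : ℝ → ℂ) : Prop :=
  ∃ c : ℤ → ℂ, T = fun x : ℝ => ∑ k ∈ Finset.Icc (-(n : ℤ)) (n : ℤ),
    c k * Complex.exp (Complex.I * k * (x : ℂ))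

/-- Best approximation E_n(f)_p. -/
def bestApprox (p : ℝ) (n : ℕ) (f : ℝ → ℂ) : ℝ :=
  sInf ((fun T => lpNorm p (fun x => f x - T x)) '' {T | IsTrigPoly n T})

/-- Fourier coefficient. -/
def fourierCoef (f : ℝ → ℂ) (k : ℤ) : ℂ :=
  (1 / (2 * Real.pi)) * ∫ x in (0:ℝ)..(2 * Real.pi), f x * Complex.exp (-(Complex.I * k * x))

/-- The Weyl multiplier (ik)^α = |k|^α e^{iαπ sign(k)/2} (0 for k = 0). -/
def weylMul (α : ℝ) (k : ℤ) : ℂ :=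
  if k = 0 then 0
  else ((|k| : ℝ) ^ α : ℝ) * Complex.exp (Complex.I * (α * Real.pi / 2) * (Int.sign k : ℂ))

/-- g is the Weyl fractional derivative of order α of f. -/
def HasWeylDeriv (α : ℝ) (f g : ℝ → ℂ) : Prop :=
  ∀ k : ℤ, fourierCoef g k = weylMul α k * fourierCoef f k

/-- g is the derivative of order α of f in the sense of L_p. -/
def HasLpDeriv (p α : ℝ) (f g : ℝ → ℂ) : Prop :=
  Tendsto (fun h : ℝ => lpNorm p (fun x => fracDiff α h f x / (h : ℂ) ^ (α : ℂ) - g x))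
    (nhdsWithin 0 (Set.Ioi 0)) (nhds 0)

/-- α ∈ ℕ ∪ (1/p−1, ∞). -/
def InFracSet (p α : ℝ) : Prop := (∃ m : ℕ, 0 < m ∧ α = m) ∨ α > 1 / p - 1

/-- σ_{α,p}(n) from Theorem propanal1. -/
def sigma' (α p : ℝ) (n : ℕ) : ℝ :=
  if (∃ m : ℕ, 0 < m ∧ α = m) ∨ α > 1 / p - 1 then (n : ℝ) ^ α
  else if α = 1 / p - 1 then (n : ℝ) ^ (1 / p - 1) * (Real.log (n + 1)) ^ (1 / p)
  else (n : ℝ) ^ (1 / p - 1)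

end

/-!
For `0 < p ≤ 1` the map `t ↦ t ^ p` is subadditive, so `|Δ_δ^α f(x)|^p` is bounded pointwise by
`∑ |binom(α,ν)|^p |f(x - νδ)|^p`. Integrating over a period, each translate of `|f|^p` has the
same integral, which gives the bound with `C = ∑ |binom(α,ν)|^p`. That series converges: by
Bernoulli's inequality `|binom(α,ν)| ν^{α+1}` is nonincreasing once `ν ≥ α`, so
`|binom(α,ν)|^p = O(ν^{-(α+1)p})`, and `(α + 1) p > 1` exactly when `α > 1/p - 1`; for `α ∈ ℕ` the
series is a finite sum.
-/

open scoped ENNReal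
open Set

theorem fracBinom_natCast_eq_zero {m ν : ℕ} (h : m < ν) : fracBinom m ν = 0 := by
  induction h with
  | refl => rw [fracBinom, sub_self, mul_zero, zero_div]
  | step _ ih => rw [fracBinom, ih, zero_mul, zero_div]

theorem abs_fracBinom_succ_mul_rpow_le {α : ℝ} (hα : 0 ≤ α) {n : ℕ} (hn : α ≤ n) :
    |fracBinom α (n + 1)| * ((n + 1 : ℕ) : ℝ) ^ (α + 1) ≤ |fracBinom α n| * (n : ℝ) ^ (α + 1) := by
  have hn1 : (0 : ℝ) < n + 1 := by positivity
  have hbernoulli : ((n : ℝ) - α) / (n + 1) ≤ (n : ℝ) ^ (α + 1) / ((n : ℝ) + 1) ^ (α + 1) := by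
    have hs : (-1 : ℝ) ≤ -1 / (n + 1) := by
      rw [le_div_iff₀ hn1]
      linarith [(Nat.cast_nonneg n : (0 : ℝ) ≤ n)]
    have h := one_add_mul_self_le_rpow_one_add hs (by linarith : (1 : ℝ) ≤ α + 1)
    rw [← Real.div_rpow (Nat.cast_nonneg n) hn1.le]
    convert h using 2 <;> field_simp <;> ring
  have hstep : ((n : ℝ) - α) / (n + 1) * ((n : ℝ) + 1) ^ (α + 1) ≤ (n : ℝ) ^ (α + 1) := by
    calc ((n : ℝ) - α) / (n + 1) * ((n : ℝ) + 1) ^ (α + 1)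
        ≤ (n : ℝ) ^ (α + 1) / ((n : ℝ) + 1) ^ (α + 1) * ((n : ℝ) + 1) ^ (α + 1) := by gcongr
      _ = (n : ℝ) ^ (α + 1) := div_mul_cancel₀ _ (by positivity)
  rw [fracBinom, abs_div, abs_mul, abs_sub_comm, abs_of_nonneg (sub_nonneg.2 hn),
    abs_of_pos hn1, Nat.cast_succ, mul_div_assoc, mul_assoc]
  gcongr

theorem abs_fracBinom_mul_rpow_le {α : ℝ} (hα : 0 ≤ α) {n : ℕ} (hn : ⌈α⌉₊ ≤ n) :
    |fracBinom α n| * (n : ℝ) ^ (α + 1) ≤ |fracBinom α ⌈α⌉₊| * (⌈α⌉₊ : ℝ) ^ (α + 1) := by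
  induction n, hn using Nat.le_induction with
  | base => exact le_rfl
  | succ n hn ih =>
    have hαn : α ≤ n := (Nat.le_ceil α).trans (by exact_mod_cast hn)
    exact (abs_fracBinom_succ_mul_rpow_le hα hαn).trans ih

theorem summable_abs_fracBinom_rpow_of_one_lt_mul {α p : ℝ} (hα : 0 ≤ α) (hp : 0 < p)
    (hαp : 1 < (α + 1) * p) : Summable fun ν : ℕ => |fracBinom α ν| ^ p := by
  set C := |fracBinom α ⌈α⌉₊| * (⌈α⌉₊ : ℝ) ^ (α + 1)
  have hC : 0 ≤ C := by positivity
  refine Summable.of_norm_bounded_eventually_nat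
    ((Real.summable_nat_rpow.2 (by linarith : -((α + 1) * p) < -1)).mul_left (C ^ p)) ?_
  filter_upwards [eventually_ge_atTop (max ⌈α⌉₊ 1)] with n hn
  have hn0 : (0 : ℝ) < n := by exact_mod_cast (le_of_max_le_right hn)
  have hb : |fracBinom α n| ≤ C / (n : ℝ) ^ (α + 1) :=
    (le_div_iff₀ (by positivity)).2 (abs_fracBinom_mul_rpow_le hα (le_of_max_le_left hn))
  calc ‖|fracBinom α n| ^ p‖ = |fracBinom α n| ^ p := Real.norm_of_nonneg (by positivity)
    _ ≤ (C / (n : ℝ) ^ (α + 1)) ^ p := by gcongr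
    _ = C ^ p * (n : ℝ) ^ (-((α + 1) * p)) := by
      rw [Real.div_rpow hC (by positivity), ← Real.rpow_mul hn0.le, Real.rpow_neg hn0.le,
        div_eq_mul_inv]

theorem summable_abs_fracBinom_rpow {p α : ℝ} (hp : 0 < p) (hp1 : p < 1) (hα : InFracSet p α) :
    Summable fun ν : ℕ => |fracBinom α ν| ^ p := by
  rcases hα with ⟨m, -, rfl⟩ | hα
  · refine summable_of_ne_finset_zero (s := Finset.range (m + 1)) fun ν hν => ?_
    rw [fracBinom_natCast_eq_zero (by simpa using hν), abs_zero, Real.zero_rpow hp.ne']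
  · have hp_inv : 1 < 1 / p := by rw [lt_div_iff₀ hp]; linarith
    refine summable_abs_fracBinom_rpow_of_one_lt_mul (by linarith) hp ?_
    rw [← div_lt_iff₀ hp]
    linarith

theorem ENNReal.rpow_sum_le_sum_rpow {ι : Type*} (s : Finset ι) (c : ι → ℝ≥0∞) {p : ℝ}
    (hp : 0 < p) (hp1 : p ≤ 1) : (∑ i ∈ s, c i) ^ p ≤ ∑ i ∈ s, c i ^ p := by
  classical
  induction s using Finset.induction with
  | empty => simp [ENNReal.zero_rpow_of_pos hp]
  | insert a s ha ih =>
    rw [Finset.sum_insert ha, Finset.sum_insert ha]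
    calc (c a + ∑ i ∈ s, c i) ^ p ≤ c a ^ p + (∑ i ∈ s, c i) ^ p :=
          ENNReal.rpow_add_le_add_rpow _ _ hp.le hp1
      _ ≤ c a ^ p + ∑ i ∈ s, c i ^ p := by gcongr

theorem ENNReal.rpow_tsum_le_tsum_rpow {ι : Type*} (c : ι → ℝ≥0∞) {p : ℝ} (hp : 0 < p)
    (hp1 : p ≤ 1) : (∑' i, c i) ^ p ≤ ∑' i, c i ^ p :=
  le_of_tendsto' ((ENNReal.continuous_rpow_const.tendsto _).comp ENNReal.summable.hasSum)
    fun s => (ENNReal.rpow_sum_le_sum_rpow s c hp hp1).trans (ENNReal.sum_le_tsum s)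

theorem ofReal_norm_rpow {E : Type*} [SeminormedAddGroup E] (z : E) {p : ℝ} (hp : 0 ≤ p) :
    ENNReal.ofReal (‖z‖ ^ p) = ‖z‖ₑ ^ p := by
  rw [← ENNReal.ofReal_rpow_of_nonneg (norm_nonneg z) hp, ofReal_norm]

theorem enorm_fracDiff_rpow_le {p : ℝ} (hp : 0 < p) (hp1 : p ≤ 1) (α δ : ℝ) (f : ℝ → ℂ) (x : ℝ) :
    ‖fracDiff α δ f x‖ₑ ^ p ≤ ∑' ν : ℕ, ‖fracBinom α ν‖ₑ ^ p * ‖f (x - ν * δ)‖ₑ ^ p := by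
  calc ‖fracDiff α δ f x‖ₑ ^ p
      ≤ (∑' ν : ℕ, ‖(fracBinom α ν : ℂ) * (-1) ^ ν * f (x - ν * δ)‖ₑ) ^ p := by
        gcongr
        exact enorm_tsum_le_tsum_enorm
    _ ≤ ∑' ν : ℕ, ‖(fracBinom α ν : ℂ) * (-1) ^ ν * f (x - ν * δ)‖ₑ ^ p :=
        ENNReal.rpow_tsum_le_tsum_rpow _ hp hp1
    _ = ∑' ν : ℕ, ‖fracBinom α ν‖ₑ ^ p * ‖f (x - ν * δ)‖ₑ ^ p := by
        refine tsum_congr fun ν => ?_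
        rw [enorm_mul, enorm_mul, enorm_pow, enorm_neg, enorm_one, one_pow, mul_one,
          ENNReal.mul_rpow_of_nonneg _ _ hp.le, ← ofReal_norm, Complex.norm_real, ofReal_norm]

theorem Function.Periodic.setLIntegral_Ioc_comp_sub {T : ℝ} {E : ℝ → ℝ≥0∞}
    (hE : Function.Periodic E T) (hT : 0 < T) (c : ℝ) :
    ∫⁻ x in Ioc 0 T, E (x - c) = ∫⁻ x in Ioc 0 T, E x := by
  have hpre : (· - c) ⁻¹' Ioc (-c) (-c + T) = Ioc 0 T := by
    ext x
    simp only [mem_preimage, mem_Ioc]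
    constructor <;> rintro ⟨h1, h2⟩ <;> constructor <;> linarith
  conv_lhs => rw [← hpre]
  rw [(measurePreserving_sub_right volume c).setLIntegral_comp_preimage_emb
    (measurableEmbedding_subRight c)]
  have : VAddInvariantMeasure (AddSubgroup.zmultiples T) ℝ volume :=
    ⟨fun c s _ => measure_preimage_add _ _ _⟩
  have h := (isAddFundamentalDomain_Ioc hT (-c)).setLIntegral_eq
    (isAddFundamentalDomain_Ioc hT 0) E hE.map_vadd_zmultiples
  rwa [zero_add] at h

theorem setLIntegral_enorm_fracDiff_rpow_le {p T : ℝ} (hp : 0 < p) (hp1 : p ≤ 1) (hT : 0 < T)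
    (α δ : ℝ) {f : ℝ → ℂ} (hf : Function.Periodic f T)
    (hfi : IntervalIntegrable (fun x => ‖f x‖ ^ p) volume 0 T) :
    ∫⁻ x in Ioc 0 T, ‖fracDiff α δ f x‖ₑ ^ p ≤
      (∑' ν : ℕ, ‖fracBinom α ν‖ₑ ^ p) * ∫⁻ x in Ioc 0 T, ‖f x‖ₑ ^ p := by
  have hG : Function.Periodic (fun x => ‖f x‖ ^ p) T := fun x => by simp only [hf x]
  have hmeas (c : ℝ) : AEMeasurable (fun x => ‖f (x - c)‖ₑ ^ p) (volume.restrict (Ioc 0 T)) := by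
    have h := (hG.intervalIntegrable₀ hT.ne' hfi (-c) (T - c)).comp_sub_right c
    rw [neg_add_cancel, sub_add_cancel, intervalIntegrable_iff_integrableOn_Ioc_of_le hT.le] at h
    simpa only [Function.comp_def, ofReal_norm_rpow _ hp.le] using
      ENNReal.measurable_ofReal.comp_aemeasurable h.aestronglyMeasurable.aemeasurable
  calc ∫⁻ x in Ioc 0 T, ‖fracDiff α δ f x‖ₑ ^ p
      ≤ ∫⁻ x in Ioc 0 T, ∑' ν : ℕ, ‖fracBinom α ν‖ₑ ^ p * ‖f (x - ν * δ)‖ₑ ^ p :=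
        lintegral_mono fun x => enorm_fracDiff_rpow_le hp hp1 α δ f x
    _ = ∑' ν : ℕ, ‖fracBinom α ν‖ₑ ^ p * ∫⁻ x in Ioc 0 T, ‖f (x - ν * δ)‖ₑ ^ p := by
        rw [lintegral_tsum fun ν => (hmeas _).const_mul _]
        exact tsum_congr fun ν => lintegral_const_mul'' _ (hmeas _)
    _ = ∑' ν : ℕ, ‖fracBinom α ν‖ₑ ^ p * ∫⁻ x in Ioc 0 T, ‖f x‖ₑ ^ p := by
        have hE : Function.Periodic (fun x => ‖f x‖ₑ ^ p) T := fun x => by simp only [hf x]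
        exact tsum_congr fun ν => congrArg _ (hE.setLIntegral_Ioc_comp_sub hT _)
    _ = (∑' ν : ℕ, ‖fracBinom α ν‖ₑ ^ p) * ∫⁻ x in Ioc 0 T, ‖f x‖ₑ ^ p := ENNReal.tsum_mul_right

theorem intervalIntegral_norm_fracDiff_rpow_le {p T : ℝ} (hp : 0 < p) (hp1 : p ≤ 1) (hT : 0 < T)
    {α : ℝ} (hS : Summable fun ν : ℕ => |fracBinom α ν| ^ p) (δ : ℝ) {f : ℝ → ℂ}
    (hf : Function.Periodic f T) (hfi : IntervalIntegrable (fun x => ‖f x‖ ^ p) volume 0 T) :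
    ∫ x in 0..T, ‖fracDiff α δ f x‖ ^ p ≤
      (∑' ν : ℕ, |fracBinom α ν| ^ p) * ∫ x in 0..T, ‖f x‖ ^ p := by
  have hS0 : 0 ≤ ∑' ν : ℕ, |fracBinom α ν| ^ p := tsum_nonneg fun _ => by positivity
  by_cases hF : IntervalIntegrable (fun x => ‖fracDiff α δ f x‖ ^ p) volume 0 T
  swap
  · rw [intervalIntegral.integral_undef hF]
    exact mul_nonneg hS0 (intervalIntegral.integral_nonneg hT.le fun _ _ => by positivity)
  have hlintegral {g : ℝ → ℂ} (hg : IntervalIntegrable (fun x => ‖g x‖ ^ p) volume 0 T) :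
      ∫ x in 0..T, ‖g x‖ ^ p = (∫⁻ x in Ioc 0 T, ‖g x‖ₑ ^ p).toReal := by
    rw [intervalIntegral.integral_of_le hT.le, integral_eq_lintegral_of_nonneg_ae
      (ae_of_all _ fun _ => by positivity) hg.1.aestronglyMeasurable]
    simp only [ofReal_norm_rpow _ hp.le]
  have hfinite : ∫⁻ x in Ioc 0 T, ‖f x‖ₑ ^ p ≠ ⊤ := by
    simpa only [Function.comp_def, ofReal_norm_rpow _ hp.le] using hfi.1.lintegral_lt_top.ne
  have hS : ∑' ν : ℕ, ‖fracBinom α ν‖ₑ ^ p = ENNReal.ofReal (∑' ν : ℕ, |fracBinom α ν| ^ p) := by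
    rw [ENNReal.ofReal_tsum_of_nonneg (fun _ => by positivity) hS]
    simp only [← Real.norm_eq_abs, ofReal_norm_rpow _ hp.le]
  rw [hlintegral hF, hlintegral hfi, ← ENNReal.toReal_ofReal hS0, ← ENNReal.toReal_mul, ← hS]
  exact ENNReal.toReal_mono (ENNReal.mul_ne_top (hS ▸ ENNReal.ofReal_ne_top) hfinite)
    (setLIntegral_enorm_fracDiff_rpow_le hp hp1 hT α δ hf hfi)

theorem lpNorm_rpow {p : ℝ} (hp : p ≠ 0) (g : ℝ → ℂ) :
    lpNorm p g ^ p = 1 / (2 * π) * ∫ x in (0 : ℝ)..(2 * π), ‖g x‖ ^ p := by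
  have hbase : 0 ≤ 1 / (2 * π) * ∫ x in (0 : ℝ)..(2 * π), ‖g x‖ ^ p :=
    mul_nonneg (by positivity)
      (intervalIntegral.integral_nonneg (by positivity) fun _ _ => by positivity)
  rw [_root_.lpNorm, ← Real.rpow_mul hbase, one_div_mul_cancel hp, Real.rpow_one]

theorem stmt1_general (p α : ℝ) (hp : 0 < p) (hp1 : p < 1) (hαset : InFracSet p α) :
    Summable (fun ν : ℕ => |fracBinom α ν| ^ p) ∧
    ∃ C > 0, ∀ f : ℝ → ℂ, InLp p f → ∀ δ : ℝ,
      lpNorm p (fracDiff α δ f) ^ p ≤ C * lpNorm p f ^ p := by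
  have hS := summable_abs_fracBinom_rpow hp hp1 hαset
  have hC : 1 ≤ ∑' ν : ℕ, |fracBinom α ν| ^ p := by
    simpa [fracBinom] using hS.le_tsum 0 fun _ _ => by positivity
  refine ⟨hS, _, one_pos.trans_le hC, fun f hf δ => ?_⟩
  rw [lpNorm_rpow hp.ne', lpNorm_rpow hp.ne', mul_left_comm]
  gcongr
  exact intervalIntegral_norm_fracDiff_rpow_le hp hp1.le two_pi_pos hS δ hf.1 hf.2

theorem stmt1 (p α : ℝ) (hp : 0 < p) (hp1 : p < 1) (hα : 0 < α) (hαset : InFracSet p α) :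
    Summable (fun ν : ℕ => |fracBinom α ν| ^ p) ∧
    ∃ C > 0, ∀ f : ℝ → ℂ, InLp p f → ∀ δ : ℝ,
      lpNorm p (fracDiff α δ f) ^ p ≤ C * lpNorm p f ^ p :=
  stmt1_general p α hp hp1 hαset
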